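/- Let c₁, c₂, D₀, E > 0 be constants and let b₀, b', b be real numbers with 0 < b₀ < 1, 0 < b' < 1, 0 < b < 1, and b² > b₀, b² > b'. Let (aₙ)_{n≥1}, (wₙ)_{n≥1}, (zₙ)_{n≥1}, (uₙ)_{n≥1}, (vₙ)_{n≥1} be sequences of nonnegative real numbers satisfying, for all n ≥ 1: aₙ ≤ D₀·b₀^{2^n}, wₙ ≤ E·(b')^{2^n}, zₙ ≤ E, together with the recursive inequalities u_{n+1} ≤ c₁·(aₙ·uₙ + wₙ + aₙ·zₙ + aₙ²·vₙ) and v_{n+1} ≤ vₙ + c₂·(uₙ + aₙ·vₙ). Then there exists a constant D > 0 such that for all n ≥ 1: uₙ ≤ D·b^{2^n} and vₙ ≤ D·(1 − 2^{−n}). -/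

import Mathlib

/-!
Since `b ^ 2 ^ n` decays doubly exponentially, beyond some `n₀` it is small compared with any
fixed multiple of `(1/2) ^ n`. Past `n₀` the two bounds propagate as soon as
`D ≥ 2 c₁ E (1 + D₀)`: because `b₀, b' < b ^ 2`, every term of the `u`-recursion is
`O(b ^ 2 ^ (n + 1))`, and the increment `v (n + 1) - v n` is at most `D (1/2) ^ (n + 1)`.
The finitely many indices `1 ≤ n ≤ n₀` are absorbed by enlarging `D`.
-/

open Filter Topology

lemma tendsto_two_pow_mul_pow_two_pow {b : ℝ} (hb0 : 0 ≤ b) (hb1 : b < 1) :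
    Tendsto (fun n : ℕ => (2 : ℝ) ^ n * b ^ 2 ^ n) atTop (𝓝 0) := by
  simpa [Function.comp_def] using (tendsto_self_mul_const_pow_of_lt_one hb0 hb1).comp
    (tendsto_pow_atTop_atTop_of_one_lt (one_lt_two : 1 < 2))

lemma eventually_mul_pow_two_pow_le_half_pow (M : ℝ) {b : ℝ} (hb0 : 0 ≤ b) (hb1 : b < 1) :
    ∀ᶠ n : ℕ in atTop, M * b ^ 2 ^ n ≤ (1 / 2) ^ n := by
  have hM := ((tendsto_two_pow_mul_pow_two_pow hb0 hb1).const_mul M).eventually_le_const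
    (by norm_num : M * 0 < 1)
  filter_upwards [hM] with n hn
  rw [one_div_pow, le_div_iff₀ (by positivity)]
  linarith

lemma eventually_le_mul_atTop (x : ℝ) {y : ℝ} (hy : 0 < y) : ∀ᶠ D in atTop, x ≤ D * y :=
  (tendsto_id.atTop_mul_const hy).eventually_ge_atTop x

lemma pow_two_pow_le_sq_pow_two_pow {x b : ℝ} (hx : 0 ≤ x) (hxb : x ≤ b ^ 2) (n : ℕ) :
    x ^ 2 ^ n ≤ (b ^ 2 ^ n) ^ 2 := by
  calc x ^ 2 ^ n ≤ (b ^ 2) ^ 2 ^ n := pow_le_pow_left₀ hx hxb _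
    _ = (b ^ 2 ^ n) ^ 2 := by rw [← pow_mul, ← pow_mul, mul_comm]

section AveragingStep

variable {c₁ c₂ D₀ E D B a u w z v : ℝ}

/-- In the induction, `B` stands for `b ^ 2 ^ n`. -/
lemma defect_bound_step (hc₁ : 0 ≤ c₁) (hE : 0 ≤ E) (hD : 0 ≤ D)
    (hB0 : 0 ≤ B) (hB1 : B ≤ 1) (hsmall : 2 * c₁ * (D₀ + D₀ ^ 2) * B ≤ 1)
    (hDE : 2 * c₁ * E * (1 + D₀) ≤ D) (ha0 : 0 ≤ a) (ha : a ≤ D₀ * B ^ 2)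
    (hu : u ≤ D * B) (hw : w ≤ E * B ^ 2) (hz : z ≤ E) (hv : v ≤ D) :
    c₁ * (a * u + w + a * z + a ^ 2 * v) ≤ D * B ^ 2 := by
  have hau : a * u ≤ D₀ * B ^ 2 * (D * B) :=
    (mul_le_mul_of_nonneg_left hu ha0).trans (mul_le_mul_of_nonneg_right ha (by positivity))
  have haz : a * z ≤ D₀ * B ^ 2 * E :=
    (mul_le_mul_of_nonneg_left hz ha0).trans (mul_le_mul_of_nonneg_right ha hE)
  have hav : a ^ 2 * v ≤ (D₀ * B ^ 2) ^ 2 * D :=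
    (mul_le_mul_of_nonneg_left hv (by positivity)).trans
      (mul_le_mul_of_nonneg_right (pow_le_pow_left₀ ha0 ha 2) hD)
  have hB4 : B ^ 4 ≤ B ^ 3 := pow_le_pow_of_le_one hB0 hB1 (by norm_num)
  have hsum : a * u + w + a * z + a ^ 2 * v ≤
      B ^ 2 * (D * ((D₀ + D₀ ^ 2) * B) + E * (1 + D₀)) := by
    linarith [mul_le_mul_of_nonneg_left hB4 (by positivity : 0 ≤ D₀ ^ 2 * D)]
  calc c₁ * (a * u + w + a * z + a ^ 2 * v)
      ≤ c₁ * (B ^ 2 * (D * ((D₀ + D₀ ^ 2) * B) + E * (1 + D₀))) :=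
        mul_le_mul_of_nonneg_left hsum hc₁
    _ = B ^ 2 * (D * (2 * c₁ * (D₀ + D₀ ^ 2) * B) + 2 * c₁ * E * (1 + D₀)) / 2 := by ring
    _ ≤ B ^ 2 * (D * 1 + D) / 2 := by gcongr
    _ = D * B ^ 2 := by ring

/-- In the induction, `B` stands for `b ^ 2 ^ n` and `h` for `(1/2) ^ n`. -/
lemma norm_bound_step {h v' : ℝ} (hc₂ : 0 ≤ c₂) (hD₀ : 0 ≤ D₀) (hD : 0 ≤ D)
    (hB0 : 0 ≤ B) (hB1 : B ≤ 1) (hh : 0 ≤ h) (hsmall : 2 * c₂ * (1 + D₀) * B ≤ h)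
    (ha0 : 0 ≤ a) (ha : a ≤ D₀ * B ^ 2) (hu : u ≤ D * B) (hv : v ≤ D * (1 - h))
    (hv' : v' ≤ v + c₂ * (u + a * v)) :
    v' ≤ D * (1 - h / 2) := by
  have hvD : v ≤ D := hv.trans (mul_le_of_le_one_right hD (sub_le_self 1 hh))
  have hav : a * v ≤ D₀ * B * D :=
    (mul_le_mul_of_nonneg_left hvD ha0).trans
      (mul_le_mul_of_nonneg_right (ha.trans
        (mul_le_mul_of_nonneg_left (pow_le_of_le_one hB0 hB1 two_ne_zero) hD₀)) hD)
  have hinc : c₂ * (u + a * v) ≤ D * (2 * c₂ * (1 + D₀) * B) / 2 := by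
    linarith [mul_le_mul_of_nonneg_left (add_le_add hu hav) hc₂]
  linarith [mul_le_mul_of_nonneg_left hsmall hD]

end AveragingStep

theorem ck_estimates_induction_general
    (c₁ c₂ D₀ E : ℝ) (hc₁ : 0 < c₁) (hc₂ : 0 < c₂) (hD₀ : 0 < D₀) (hE : 0 < E)
    (b₀ b' b : ℝ)
    (hb₀ : 0 < b₀)
    (hb' : 0 < b')
    (hb : 0 < b) (hb1 : b < 1)
    (hbb₀ : b₀ < b ^ 2) (hbb' : b' < b ^ 2)
    (a w z u v : ℕ → ℝ)
    (ha0 : ∀ n, 1 ≤ n → 0 ≤ a n)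
    (ha : ∀ n, 1 ≤ n → a n ≤ D₀ * b₀ ^ (2 ^ n))
    (hw : ∀ n, 1 ≤ n → w n ≤ E * b' ^ (2 ^ n))
    (hz : ∀ n, 1 ≤ n → z n ≤ E)
    (hu : ∀ n, 1 ≤ n → u (n + 1) ≤ c₁ * (a n * u n + w n + a n * z n + (a n) ^ 2 * v n))
    (hv : ∀ n, 1 ≤ n → v (n + 1) ≤ v n + c₂ * (u n + a n * v n)) :
    ∃ D : ℝ, 0 < D ∧ ∀ n, 1 ≤ n →
      u n ≤ D * b ^ (2 ^ n) ∧ v n ≤ D * (1 - (1 / 2 : ℝ) ^ n) := by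
  obtain ⟨n₀, hn₀⟩ := eventually_atTop.1 ((eventually_ge_atTop 1).and <|
    (eventually_mul_pow_two_pow_le_half_pow (2 * c₁ * (D₀ + D₀ ^ 2)) hb.le hb1).and
      (eventually_mul_pow_two_pow_le_half_pow (2 * c₂ * (1 + D₀)) hb.le hb1))
  have hhalf_pos : ∀ n, 1 ≤ n → 0 < 1 - (1 / 2 : ℝ) ^ n := fun n hn =>
    sub_pos.2 (pow_lt_one₀ (by norm_num) (by norm_num) (by omega))
  obtain ⟨D, hD, hDE, hbase⟩ := ((eventually_gt_atTop 0).and <|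
    (eventually_ge_atTop (2 * c₁ * E * (1 + D₀))).and <|
    (eventually_all_finset (Finset.Icc 1 n₀)).2 fun n hn =>
      (eventually_le_mul_atTop (u n) (y := b ^ 2 ^ n) (by positivity)).and
        (eventually_le_mul_atTop (v n) (hhalf_pos n (Finset.mem_Icc.1 hn).1))).exists
  refine ⟨D, hD, fun n hn => ?_⟩
  obtain hle | hle := le_total n n₀
  · exact hbase n (Finset.mem_Icc.2 ⟨hn, hle⟩)
  induction n, hle using Nat.le_induction with
  | base => exact hbase n₀ (Finset.mem_Icc.2 ⟨hn, le_rfl⟩)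
  | succ n hn₀n ih =>
    obtain ⟨hn1, hsmall₁, hsmall₂⟩ := hn₀ n hn₀n
    obtain ⟨ihu, ihv⟩ := ih (by omega)
    have hB0 : 0 ≤ b ^ 2 ^ n := by positivity
    have hB1 : b ^ 2 ^ n ≤ 1 := pow_le_one₀ hb.le hb1.le
    have ha' : a n ≤ D₀ * (b ^ 2 ^ n) ^ 2 := (ha n hn1).trans <|
      mul_le_mul_of_nonneg_left (pow_two_pow_le_sq_pow_two_pow hb₀.le hbb₀.le n) hD₀.le
    have hw' : w n ≤ E * (b ^ 2 ^ n) ^ 2 := (hw n hn1).trans <|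
      mul_le_mul_of_nonneg_left (pow_two_pow_le_sq_pow_two_pow hb'.le hbb'.le n) hE.le
    have hhalf : (1 / 2 : ℝ) ^ n ≤ 1 := pow_le_one₀ (by norm_num) (by norm_num)
    have hvD : v n ≤ D :=
      ihv.trans (mul_le_of_le_one_right hD.le (sub_le_self 1 (by positivity)))
    rw [pow_succ 2 n, pow_mul, pow_succ (1 / 2 : ℝ) n, mul_one_div]
    exact ⟨(hu n hn1).trans (defect_bound_step hc₁.le hE.le hD.le hB0 hB1
        (hsmall₁.trans hhalf) hDE (ha0 n hn1) ha' ihu hw' (hz n hn1) hvD),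
      norm_bound_step hc₂.le hD₀.le hD.le hB0 hB1 (by positivity) hsmall₂ (ha0 n hn1) ha' ihu ihv
        (hv n hn1)⟩

/-- Numerical induction behind the Cᵏ-estimates of the averaging algorithm. -/
theorem ck_estimates_induction
    (c₁ c₂ D₀ E : ℝ) (hc₁ : 0 < c₁) (hc₂ : 0 < c₂) (hD₀ : 0 < D₀) (hE : 0 < E)
    (b₀ b' b : ℝ)
    (hb₀ : 0 < b₀) (hb₀1 : b₀ < 1)
    (hb' : 0 < b') (hb'1 : b' < 1)
    (hb : 0 < b) (hb1 : b < 1)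
    (hbb₀ : b₀ < b ^ 2) (hbb' : b' < b ^ 2)
    (a w z u v : ℕ → ℝ)
    (ha0 : ∀ n, 1 ≤ n → 0 ≤ a n) (hw0 : ∀ n, 1 ≤ n → 0 ≤ w n)
    (hz0 : ∀ n, 1 ≤ n → 0 ≤ z n) (hu0 : ∀ n, 1 ≤ n → 0 ≤ u n)
    (hv0 : ∀ n, 1 ≤ n → 0 ≤ v n)
    (ha : ∀ n, 1 ≤ n → a n ≤ D₀ * b₀ ^ (2 ^ n))
    (hw : ∀ n, 1 ≤ n → w n ≤ E * b' ^ (2 ^ n))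
    (hz : ∀ n, 1 ≤ n → z n ≤ E)
    (hu : ∀ n, 1 ≤ n → u (n + 1) ≤ c₁ * (a n * u n + w n + a n * z n + (a n) ^ 2 * v n))
    (hv : ∀ n, 1 ≤ n → v (n + 1) ≤ v n + c₂ * (u n + a n * v n)) :
    ∃ D : ℝ, 0 < D ∧ ∀ n, 1 ≤ n →
      u n ≤ D * b ^ (2 ^ n) ∧ v n ≤ D * (1 - (1 / 2 : ℝ) ^ n) :=
  ck_estimates_induction_general c₁ c₂ D₀ E hc₁ hc₂ hD₀ hE b₀ b' b hb₀ hb' hb hb1 hbb₀ hbb' a w z u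
    v ha0 ha hw hz hu hv
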